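/- Let D ⊂ ℝⁿ be compact convex with B̄_α ⊆ D for some α > 0, and let u₀ : ℝⁿ → ℝ be uniformly continuous. Define ū(x, t) := inf{u₀(y) : x ∈ y + tD} for t > 0 and ū(x, 0) = u₀(x). Then ū is a viscosity solution of ū_t + H̄(Dū) = 0 in ℝⁿ × (0, ∞) with ū(·, 0) = u₀, where H̄(p) := sup_{q ∈ D} p · q. -/

import Mathlib

open Metric Set Pointwise
open scoped RealInnerProductSpace

noncomputable section

/-- The support function of `D`: `H̄(p) = sup_{q ∈ D} ⟪p, q⟫`. -/
def Hbar {n : ℕ} (D : Set (EuclideanSpace ℝ (Fin n)))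
    (p : EuclideanSpace ℝ (Fin n)) : ℝ :=
  sSup ((fun q => ⟪p, q⟫) '' D)

/-- The Lax–Oleinik (Hopf–Lax) formula `ū(x,t) = inf {u₀(y) : x ∈ y + tD}`. -/
def laxOleinik {n : ℕ} (D : Set (EuclideanSpace ℝ (Fin n)))
    (u₀ : EuclideanSpace ℝ (Fin n) → ℝ)
    (x : EuclideanSpace ℝ (Fin n)) (t : ℝ) : ℝ :=
  if t = 0 then u₀ x else sInf (u₀ '' {y | x ∈ {y} + t • D})

/-- Viscosity subsolution of `u_t + H̄(Du) = 0` in `ℝⁿ × (0,∞)` with `C¹` test functions. -/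
def IsViscSubsol {n : ℕ} (D : Set (EuclideanSpace ℝ (Fin n)))
    (u : EuclideanSpace ℝ (Fin n) → ℝ → ℝ) : Prop :=
  ∀ (φ : EuclideanSpace ℝ (Fin n) → ℝ → ℝ) (x : EuclideanSpace ℝ (Fin n)) (t : ℝ),
    0 < t → ContDiff ℝ 1 (fun p : EuclideanSpace ℝ (Fin n) × ℝ => φ p.1 p.2) →
    IsLocalMax (fun p : EuclideanSpace ℝ (Fin n) × ℝ => u p.1 p.2 - φ p.1 p.2) (x, t) →
    deriv (fun s => φ x s) t + Hbar D (gradient (fun y => φ y t) x) ≤ 0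

/-- Viscosity supersolution of `u_t + H̄(Du) = 0` in `ℝⁿ × (0,∞)` with `C¹` test functions. -/
def IsViscSupersol {n : ℕ} (D : Set (EuclideanSpace ℝ (Fin n)))
    (u : EuclideanSpace ℝ (Fin n) → ℝ → ℝ) : Prop :=
  ∀ (φ : EuclideanSpace ℝ (Fin n) → ℝ → ℝ) (x : EuclideanSpace ℝ (Fin n)) (t : ℝ),
    0 < t → ContDiff ℝ 1 (fun p : EuclideanSpace ℝ (Fin n) × ℝ => φ p.1 p.2) →
    IsLocalMin (fun p : EuclideanSpace ℝ (Fin n) × ℝ => u p.1 p.2 - φ p.1 p.2) (x, t) →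
    0 ≤ deriv (fun s => φ x s) t + Hbar D (gradient (fun y => φ y t) x)

/-!
For `t > 0` the infimum is a minimum, `ū(x,t) = min_{q ∈ D} u₀(x - t q)`. Along a line
`s ↦ (x - (t - s) q, s)` with `q ∈ D`, convexity of `D` gives `ū(x,t) ≤ ū(x - (t - s) q, s)` for
`0 < s ≤ t`, and the reverse inequality holds when `q` is a minimiser for `(x,t)`. So if `ū - φ`
has a local maximum (minimum) at `(x,t)`, then `s ↦ φ(x - (t - s) q, s)` has a minimum (maximum)
at `s = t` from the left, and its derivative `φ_t + ⟪∇φ, q⟫` is `≤ 0` for every `q ∈ D`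
(`≥ 0` for the minimiser). Taking the supremum over `q` gives the two viscosity inequalities.
-/

theorem setOf_mem_singleton_add_smul_eq_image {M α : Type*} [AddCommGroup M] [SMul α M]
    (D : Set M) (x : M) (t : α) :
    {y : M | x ∈ ({y} : Set M) + t • D} = (fun q => x - t • q) '' D := by
  ext y
  simp only [mem_ofPred_eq, singleton_add, image_add_left, mem_preimage, mem_smul_set, mem_image]
  constructor
  · rintro ⟨q, hq, h⟩
    exact ⟨q, hq, by rw [h]; abel⟩
  · rintro ⟨q, hq, rfl⟩
    exact ⟨q, hq, by abel⟩

theorem IsLocalMinOn.hasDerivAt_nonpos_of_Iic {f : ℝ → ℝ} {f' a : ℝ}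
    (h : IsLocalMinOn f (Iic a) a) (hf : HasDerivAt f f' a) : f' ≤ 0 := by
  have hy : (-1 : ℝ) ∈ posTangentConeAt (Iic a) a :=
    mem_posTangentConeAt_of_segment_subset <| by
      rw [segment_symm, segment_eq_Icc (by linarith)]
      exact Icc_subset_Iic_self
  simpa using h.hasFDerivWithinAt_nonneg hf.hasFDerivAt.hasFDerivWithinAt hy

theorem IsLocalMaxOn.hasDerivAt_nonneg_of_Iic {f : ℝ → ℝ} {f' a : ℝ}
    (h : IsLocalMaxOn f (Iic a) a) (hf : HasDerivAt f f' a) : 0 ≤ f' := by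
  simpa using h.neg.hasDerivAt_nonpos_of_Iic hf.neg

section AlongLine

variable {E : Type*} [TopologicalSpace E] [AddCommGroup E] [Module ℝ E] [ContinuousSub E]
  [ContinuousSMul ℝ E]

theorem IsLocalMax.along_line {f : E × ℝ → ℝ} {x : E} {t : ℝ} (h : IsLocalMax f (x, t))
    (q : E) : IsLocalMax (fun s => f (x - (t - s) • q, s)) t := by
  have h' : IsLocalMax f ((fun s : ℝ => (x - (t - s) • q, s)) t) := by simpa using h
  exact h'.comp_continuous (g := fun s : ℝ => (x - (t - s) • q, s)) (by fun_prop)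

theorem IsLocalMin.along_line {f : E × ℝ → ℝ} {x : E} {t : ℝ} (h : IsLocalMin f (x, t))
    (q : E) : IsLocalMin (fun s => f (x - (t - s) • q, s)) t := by
  have h' : IsLocalMin f ((fun s : ℝ => (x - (t - s) • q, s)) t) := by simpa using h
  exact h'.comp_continuous (g := fun s : ℝ => (x - (t - s) • q, s)) (by fun_prop)

end AlongLine

section Gradient

variable {E : Type*} [NormedAddCommGroup E] [InnerProductSpace ℝ E] [CompleteSpace E]

theorem hasDerivAt_along_line (φ : E → ℝ → ℝ) {x : E} {t : ℝ}
    (hφ : DifferentiableAt ℝ (fun p : E × ℝ => φ p.1 p.2) (x, t)) (q : E) :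
    HasDerivAt (fun s => φ (x - (t - s) • q) s)
      (deriv (fun s => φ x s) t + ⟪gradient (fun y => φ y t) x, q⟫) t := by
  set L := fderiv ℝ (fun p : E × ℝ => φ p.1 p.2) (x, t)
  have hL : HasFDerivAt (fun p : E × ℝ => φ p.1 p.2) L (x, t) := hφ.hasFDerivAt
  have hline : HasDerivAt (fun s : ℝ => (x - (t - s) • q, s)) (q, 1) t := by
    refine HasDerivAt.prodMk ?_ (hasDerivAt_id t)
    simpa using (((hasDerivAt_id t).const_sub t).smul_const q).const_sub x
  have hspace : HasFDerivAt (fun y => φ y t) (L.comp (.inl ℝ E ℝ)) x :=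
    (hL.comp x (hasFDerivAt_prodMk_left (𝕜 := ℝ) x t) :)
  have htime : HasDerivAt (fun s => φ x s) (L.comp (.inr ℝ E ℝ) 1) t :=
    (hL.comp t (hasFDerivAt_prodMk_right (𝕜 := ℝ) x t)).hasDerivAt
  refine (hL.comp_hasDerivAt_of_eq t hline (by simp)).congr_deriv ?_
  rw [← L.comp_inl_add_comp_inr, inner_gradient_left, hspace.fderiv, htime.deriv, add_comm]

end Gradient

section LaxOleinik

variable {n : ℕ} {D : Set (EuclideanSpace ℝ (Fin n))} {u₀ : EuclideanSpace ℝ (Fin n) → ℝ}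

theorem inner_le_Hbar (hD : IsCompact D) (p : EuclideanSpace ℝ (Fin n))
    {q : EuclideanSpace ℝ (Fin n)} (hq : q ∈ D) : ⟪p, q⟫ ≤ Hbar D p :=
  le_csSup (hD.image (continuous_const.inner continuous_id)).bddAbove ⟨q, hq, rfl⟩

theorem Hbar_le (hne : D.Nonempty) {p : EuclideanSpace ℝ (Fin n)} {c : ℝ}
    (h : ∀ q ∈ D, ⟪p, q⟫ ≤ c) : Hbar D p ≤ c :=
  csSup_le (hne.image _) (forall_mem_image.2 h)

theorem laxOleinik_eq_sInf (u₀ : EuclideanSpace ℝ (Fin n) → ℝ) (x : EuclideanSpace ℝ (Fin n))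
    {t : ℝ} (ht : t ≠ 0) : laxOleinik D u₀ x t = sInf ((fun q => u₀ (x - t • q)) '' D) := by
  rw [laxOleinik, if_neg ht, setOf_mem_singleton_add_smul_eq_image, image_image]

theorem laxOleinik_le (hD : IsCompact D) (hu₀ : Continuous u₀) (x : EuclideanSpace ℝ (Fin n))
    {t : ℝ} (ht : t ≠ 0) {q : EuclideanSpace ℝ (Fin n)} (hq : q ∈ D) :
    laxOleinik D u₀ x t ≤ u₀ (x - t • q) := by
  rw [laxOleinik_eq_sInf u₀ x ht]
  exact csInf_le (hD.image (by fun_prop)).bddBelow ⟨q, hq, rfl⟩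

theorem exists_laxOleinik_eq (hD : IsCompact D) (hne : D.Nonempty) (hu₀ : Continuous u₀)
    (x : EuclideanSpace ℝ (Fin n)) {t : ℝ} (ht : t ≠ 0) :
    ∃ q ∈ D, laxOleinik D u₀ x t = u₀ (x - t • q) := by
  obtain ⟨q, hq, hmin⟩ := hD.exists_isMinOn hne (f := fun q => u₀ (x - t • q)) (by fun_prop)
  refine ⟨q, hq, (laxOleinik_le hD hu₀ x ht hq).antisymm ?_⟩
  rw [laxOleinik_eq_sInf u₀ x ht]
  exact le_csInf (hne.image _) (forall_mem_image.2 hmin)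

theorem laxOleinik_le_laxOleinik_sub_smul (hD : IsCompact D) (hDc : Convex ℝ D)
    (hne : D.Nonempty) (hu₀ : Continuous u₀) (x : EuclideanSpace ℝ (Fin n))
    {q : EuclideanSpace ℝ (Fin n)} (hq : q ∈ D) {s t : ℝ} (hs : 0 < s) (hst : s ≤ t) :
    laxOleinik D u₀ x t ≤ laxOleinik D u₀ (x - (t - s) • q) s := by
  have ht : 0 < t := hs.trans_le hst
  obtain ⟨q', hq', hq'_eq⟩ := exists_laxOleinik_eq hD hne hu₀ (x - (t - s) • q) hs.ne'
  -- average velocity of an optimal path to `(x - (t - s) q, s)` followed by velocity `q`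
  have hmem : ((t - s) / t) • q + (s / t) • q' ∈ D :=
    hDc hq hq' (div_nonneg (sub_nonneg.2 hst) ht.le) (by positivity) (by field_simp; ring)
  calc laxOleinik D u₀ x t ≤ u₀ (x - t • (((t - s) / t) • q + (s / t) • q')) :=
        laxOleinik_le hD hu₀ x ht.ne' hmem
    _ = laxOleinik D u₀ (x - (t - s) • q) s := by
        rw [hq'_eq, smul_add, smul_smul, smul_smul, mul_div_cancel₀ _ ht.ne',
          mul_div_cancel₀ _ ht.ne', sub_sub]

theorem laxOleinik_sub_smul_le (hD : IsCompact D) (hu₀ : Continuous u₀)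
    {x q : EuclideanSpace ℝ (Fin n)} (hq : q ∈ D) {s t : ℝ} (hs : s ≠ 0)
    (hopt : laxOleinik D u₀ x t = u₀ (x - t • q)) :
    laxOleinik D u₀ (x - (t - s) • q) s ≤ laxOleinik D u₀ x t := by
  calc laxOleinik D u₀ (x - (t - s) • q) s ≤ u₀ (x - (t - s) • q - s • q) :=
        laxOleinik_le hD hu₀ _ hs hq
    _ = laxOleinik D u₀ x t := by rw [hopt]; congr 1; module

theorem laxOleinik_isViscSubsol (hD : IsCompact D) (hDc : Convex ℝ D) (hne : D.Nonempty)
    (hu₀ : Continuous u₀) : IsViscSubsol D (laxOleinik D u₀) := by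
  intro φ x t ht hφ hmax
  suffices ∀ q ∈ D, ⟪gradient (fun y => φ y t) x, q⟫ ≤ -deriv (fun s => φ x s) t by
    linarith [Hbar_le hne this]
  intro q hq
  have hmin : IsLocalMinOn (fun s => φ (x - (t - s) • q) s) (Iic t) t := by
    filter_upwards [(hmax.along_line q).filter_mono nhdsWithin_le_nhds, Ioc_mem_nhdsLE ht]
      with s hs hst
    have := laxOleinik_le_laxOleinik_sub_smul hD hDc hne hu₀ x hq hst.1 hst.2
    simp only [sub_self, zero_smul, sub_zero] at hs ⊢
    linarith
  linarith [hmin.hasDerivAt_nonpos_of_Iic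
    (hasDerivAt_along_line φ (hφ.differentiable one_ne_zero _) q)]

theorem laxOleinik_isViscSupersol (hD : IsCompact D) (hne : D.Nonempty) (hu₀ : Continuous u₀) :
    IsViscSupersol D (laxOleinik D u₀) := by
  intro φ x t ht hφ hmin
  obtain ⟨q, hq, hopt⟩ := exists_laxOleinik_eq hD hne hu₀ x ht.ne'
  have hmax : IsLocalMaxOn (fun s => φ (x - (t - s) • q) s) (Iic t) t := by
    filter_upwards [(hmin.along_line q).filter_mono nhdsWithin_le_nhds, Ioc_mem_nhdsLE ht]
      with s hs hst
    have := laxOleinik_sub_smul_le hD hu₀ hq hst.1.ne' hopt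
    simp only [sub_self, zero_smul, sub_zero] at hs ⊢
    linarith
  linarith [inner_le_Hbar hD (gradient (fun y => φ y t) x) hq, hmax.hasDerivAt_nonneg_of_Iic
    (hasDerivAt_along_line φ (hφ.differentiable one_ne_zero _) q)]

end LaxOleinik

theorem laxOleinik_is_viscosity_solution {n : ℕ}
    (D : Set (EuclideanSpace ℝ (Fin n))) (hD : IsCompact D) (hDc : Convex ℝ D)
    (α : ℝ) (hα : 0 < α) (hball : Metric.closedBall (0 : EuclideanSpace ℝ (Fin n)) α ⊆ D)
    (u₀ : EuclideanSpace ℝ (Fin n) → ℝ) (hu₀ : UniformContinuous u₀) :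
    IsViscSubsol D (laxOleinik D u₀) ∧ IsViscSupersol D (laxOleinik D u₀) ∧
      ∀ x, laxOleinik D u₀ x 0 = u₀ x := by
  have hne : D.Nonempty := ⟨0, hball (mem_closedBall_self hα.le)⟩
  exact ⟨laxOleinik_isViscSubsol hD hDc hne hu₀.continuous,
    laxOleinik_isViscSupersol hD hne hu₀.continuous, fun x => if_pos rfl⟩
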